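/- Let A and B be separable unital C*-algebras, and suppose there exist unital *-homomorphisms φ : A → B and ψ : B → A such that ψ ∘ φ is approximately unitarily equivalent to the identity map of A and φ ∘ ψ is approximately unitarily equivalent to the identity map of B. Then there exists a *-algebra isomorphism θ : A → B such that θ is approximately unitarily equivalent to φ and θ⁻¹ is approximately unitarily equivalent to ψ. -/

import Mathlib

/-- Two maps `φ ψ : A → B` between unital C*-algebras are *approximately unitarily
equivalent* if for every finite subset `F ⊆ A` and every `ε > 0` there is a unitary
`u ∈ B` with `‖u φ(x) u* - ψ(x)‖ < ε` for all `x ∈ F`. -/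
def ApproxUnitarilyEquiv {A B : Type*} [CStarAlgebra A] [CStarAlgebra B]
    (φ ψ : A → B) : Prop :=
  ∀ (F : Finset A) (ε : ℝ), 0 < ε →
    ∃ u : unitary B, ∀ x ∈ F, ‖(u : B) * φ x * star (u : B) - ψ x‖ < ε

/-!
Correcting `φ` and `ψ` alternately by inner automorphisms gives `φₙ = Ad uₙ ∘ φ` and
`ψₙ = Ad vₙ ∘ ψ` such that `ψₙ ∘ φₙ` and `φₙ₊₁ ∘ ψₙ` are `2⁻ⁿ`-close to the identity on finite
sets that exhaust dense sequences of `A` and `B` and contain each other's images. All these maps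
are contractive, so the triangle inequality makes `φₙ x` and `ψₙ y` Cauchy. The limits are
`*`-homomorphisms inverse to each other, and, being limits of unitary conjugates of `φ` and `ψ`,
they are approximately unitarily equivalent to them.
-/

open Filter Topology Finset TopologicalSpace

section Intertwining

variable {X Y : Type*} [PseudoMetricSpace X] [PseudoMetricSpace Y]

lemma LipschitzWith.dist_le_of_one {f : X → Y} (hf : LipschitzWith 1 f) (x y : X) :
    dist (f x) (f y) ≤ dist x y := by
  simpa using hf.dist_le_mul x y

theorem cauchySeq_apply_of_denseRange {f : ℕ → X → Y} {a : ℕ → X}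
    (hf : ∀ n, LipschitzWith 1 (f n)) (ha : DenseRange a)
    (h : ∀ j, CauchySeq fun n => f n (a j)) (x : X) : CauchySeq fun n => f n x := by
  refine Metric.cauchySeq_iff.2 fun ε hε => ?_
  obtain ⟨j, hj⟩ := Metric.denseRange_iff.1 ha x (ε / 3) (by positivity)
  obtain ⟨N, hN⟩ := Metric.cauchySeq_iff.1 (h j) (ε / 3) (by positivity)
  refine ⟨N, fun m hm n hn => ?_⟩
  calc dist (f m x) (f n x)
      ≤ dist (f m x) (f m (a j)) + dist (f m (a j)) (f n (a j)) + dist (f n (a j)) (f n x) :=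
        dist_triangle4 _ _ _ _
    _ ≤ dist x (a j) + dist (f m (a j)) (f n (a j)) + dist (a j) x := by
        gcongr <;> exact (hf _).dist_le_of_one _ _
    _ < ε / 3 + ε / 3 + ε / 3 := by
        gcongr
        · exact hN m hm n hn
        · rwa [dist_comm]
    _ = ε := by ring

/-- One half of Elliott's approximate intertwining diagram; the other half is the same condition
for `g`, `fun n => f (n + 1)` and a sequence of the target. -/
def IsApproxIntertwining (f : ℕ → X → Y) (g : ℕ → Y → X) (a : ℕ → X) (δ : ℕ → ℝ) : Prop :=
  ∀ ⦃n j : ℕ⦄, j ≤ n → dist (g n (f n (a j))) (a j) ≤ δ n ∧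
    dist (f (n + 1) (g n (f n (a j)))) (f n (a j)) ≤ δ n

namespace IsApproxIntertwining

variable {f : ℕ → X → Y} {g : ℕ → Y → X} {a : ℕ → X} {δ : ℕ → ℝ}

theorem dist_succ_le (h : IsApproxIntertwining f g a δ) (hf : ∀ n, LipschitzWith 1 (f n))
    {n j : ℕ} (hj : j ≤ n) : dist (f n (a j)) (f (n + 1) (a j)) ≤ 2 * δ n :=
  calc dist (f n (a j)) (f (n + 1) (a j))
      ≤ dist (f n (a j)) (f (n + 1) (g n (f n (a j))))
        + dist (f (n + 1) (g n (f n (a j)))) (f (n + 1) (a j)) := dist_triangle _ _ _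
    _ ≤ δ n + dist (g n (f n (a j))) (a j) := by
        gcongr
        · rw [dist_comm]; exact (h hj).2
        · exact (hf _).dist_le_of_one _ _
    _ ≤ 2 * δ n := by linarith [(h hj).1]

theorem cauchySeq_apply_of_summable (h : IsApproxIntertwining f g a δ)
    (hf : ∀ n, LipschitzWith 1 (f n)) (hδ : Summable δ) (j : ℕ) :
    CauchySeq fun n => f n (a j) := by
  refine (cauchySeq_shift j).1 <| cauchySeq_of_dist_le_of_summable (fun n => 2 * δ (n + j))
    (fun n => ?_) (((summable_nat_add_iff j).2 hδ).mul_left 2)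
  rw [Nat.succ_add]
  exact h.dist_succ_le hf (Nat.le_add_left j n)

theorem cauchySeq (h : IsApproxIntertwining f g a δ) (hf : ∀ n, LipschitzWith 1 (f n))
    (ha : DenseRange a) (hδ : Summable δ) (x : X) : CauchySeq fun n => f n x :=
  cauchySeq_apply_of_denseRange hf ha (h.cauchySeq_apply_of_summable hf hδ) x

theorem tendsto_comp (h : IsApproxIntertwining f g a δ) (hf : ∀ n, LipschitzWith 1 (f n))
    (hg : ∀ n, LipschitzWith 1 (g n)) (ha : DenseRange a) (hδ : Tendsto δ atTop (𝓝 0)) (x : X) :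
    Tendsto (fun n => g n (f n x)) atTop (𝓝 x) := by
  have hclosed : IsClosed {x | Tendsto (fun n => g n (f n x)) atTop (𝓝 (id x))} :=
    (LipschitzWith.uniformEquicontinuous (fun n => g n ∘ f n) 1
      fun n => by simpa using (hg n).comp (hf n)).equicontinuous.isClosed_setOfPred_tendsto
      continuous_id
  refine hclosed.closure_subset_iff.2 (Set.range_subset_iff.2 fun j => ?_) (ha x)
  refine tendsto_iff_dist_tendsto_zero.2 <| squeeze_zero' (.of_forall fun _ => dist_nonneg) ?_ hδ
  filter_upwards [eventually_ge_atTop j] with n hn using (h hn).1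

end IsApproxIntertwining

theorem Function.leftInverse_of_tendsto {X Y ι : Type*} [MetricSpace X] [PseudoMetricSpace Y]
    {l : Filter ι} [l.NeBot] {f : ι → X → Y} {g : ι → Y → X} {θ : X → Y} {θ' : Y → X}
    (hf : ∀ x, Tendsto (f · x) l (𝓝 (θ x))) (hg : ∀ y, Tendsto (g · y) l (𝓝 (θ' y)))
    (hgL : ∀ i, LipschitzWith 1 (g i)) (hgf : ∀ x, Tendsto (fun i => g i (f i x)) l (𝓝 x)) :
    Function.LeftInverse θ' θ := fun x =>
  tendsto_nhds_unique (hg (θ x)) <| tendsto_of_tendsto_of_dist (hgf x) <|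
    squeeze_zero (fun _ => dist_nonneg) (fun i => (hgL i).dist_le_of_one _ _)
      (tendsto_iff_dist_tendsto_zero.1 (hf x))

end Intertwining

def StarAlgHom.ofTendsto {R A B ι : Type*} [CommSemiring R] [Semiring A] [Algebra R A] [Star A]
    [Semiring B] [Algebra R B] [Star B] [TopologicalSpace B] [T2Space B]
    [IsTopologicalSemiring B] [ContinuousStar B] {l : Filter ι} [l.NeBot]
    (φ : ι → A →⋆ₐ[R] B) (θ : A → B) (h : ∀ x, Tendsto (φ · x) l (𝓝 (θ x))) :
    A →⋆ₐ[R] B where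
  toFun := θ
  map_one' := tendsto_nhds_unique (h 1) (by simpa only [map_one] using tendsto_const_nhds)
  map_mul' x y := tendsto_nhds_unique (h (x * y)) (by simpa only [map_mul] using (h x).mul (h y))
  map_zero' := tendsto_nhds_unique (h 0) (by simpa only [map_zero] using tendsto_const_nhds)
  map_add' x y := tendsto_nhds_unique (h (x + y)) (by simpa only [map_add] using (h x).add (h y))
  commutes' r := tendsto_nhds_unique (h _)
    (by simpa only [AlgHomClass.commutes] using tendsto_const_nhds)
  map_star' x := tendsto_nhds_unique (h (star x)) (by simpa only [map_star] using (h x).star)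

lemma NonUnitalStarAlgHom.lipschitzWith_one {F A B : Type*} [NonUnitalCStarAlgebra A]
    [NonUnitalCStarAlgebra B] [FunLike F A B] [NonUnitalAlgHomClass F ℂ A B] [StarHomClass F A B]
    (φ : F) : LipschitzWith 1 φ :=
  AddMonoidHomClass.lipschitz_of_bound_nnnorm φ 1 fun x => by
    simpa only [one_mul] using NonUnitalStarAlgHom.nnnorm_apply_le φ x

section CStarAlgebra

variable {A B C : Type*} [CStarAlgebra A] [CStarAlgebra B] [CStarAlgebra C]

def StarAlgHom.conjUnitary (φ : A →⋆ₐ[ℂ] B) (u : unitary B) : A →⋆ₐ[ℂ] B :=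
  (Unitary.conjStarAlgAut ℂ B u : B →⋆ₐ[ℂ] B).comp φ

namespace ApproxUnitarilyEquiv

variable {φ ψ : A → B}

theorem symm (h : ApproxUnitarilyEquiv φ ψ) : ApproxUnitarilyEquiv ψ φ := by
  intro F ε hε
  obtain ⟨u, hu⟩ := h F ε hε
  refine ⟨star u, fun x hx => ?_⟩
  have hconj : Unitary.conjStarAlgAut ℂ B (star u) (ψ x - Unitary.conjStarAlgAut ℂ B u (φ x)) =
      Unitary.conjStarAlgAut ℂ B (star u) (ψ x) - φ x := by
    rw [map_sub, ← Unitary.conjStarAlgAut_symm, StarAlgEquiv.symm_apply_apply]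
  change ‖Unitary.conjStarAlgAut ℂ B (star u) (ψ x) - φ x‖ < ε
  rw [← hconj, StarAlgEquiv.norm_map, norm_sub_rev]
  exact hu x hx

theorem of_tendsto {ι : Type*} {l : Filter ι} [l.NeBot] (u : ι → unitary B)
    (h : ∀ x, Tendsto (fun i => (u i : B) * φ x * star (u i : B)) l (𝓝 (ψ x))) :
    ApproxUnitarilyEquiv φ ψ := by
  intro F ε hε
  have hev : ∀ᶠ i in l, ∀ x ∈ F, ‖(u i : B) * φ x * star (u i : B) - ψ x‖ < ε :=
    (eventually_all_finset F).2 fun x _ => by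
      simpa only [dist_eq_norm] using (tendsto_iff_dist_tendsto_zero.1 (h x)).eventually
        (gt_mem_nhds hε)
  obtain ⟨i, hi⟩ := hev.exists
  exact ⟨u i, hi⟩

theorem conj_left (h : ApproxUnitarilyEquiv φ ψ) (w : unitary B) :
    ApproxUnitarilyEquiv (fun x => (w : B) * φ x * star (w : B)) ψ := by
  intro F ε hε
  obtain ⟨u, hu⟩ := h F ε hε
  refine ⟨u * star w, fun x hx => ?_⟩
  change ‖Unitary.conjStarAlgAut ℂ B (u * star w) (Unitary.conjStarAlgAut ℂ B w (φ x)) - ψ x‖ < ε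
  rw [Unitary.conjStarAlgAut_mul_apply, ← Unitary.conjStarAlgAut_symm,
    StarAlgEquiv.symm_apply_apply]
  exact hu x hx

theorem comp_conj {φ : A → B} {ψ : B →⋆ₐ[ℂ] C} {χ : A → C}
    (h : ApproxUnitarilyEquiv (fun x => ψ (φ x)) χ) (P : unitary B) :
    ApproxUnitarilyEquiv (fun x => ψ (P * φ x * star (P : B))) χ := by
  simpa only [map_mul, map_star] using h.conj_left ⟨ψ P, Unitary.map_mem ψ P.2⟩

end ApproxUnitarilyEquiv

theorem exists_unitaries_isApproxIntertwining (φ : A →⋆ₐ[ℂ] B) (ψ : B →⋆ₐ[ℂ] A)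
    (h1 : ApproxUnitarilyEquiv (fun a => ψ (φ a)) (id : A → A))
    (h2 : ApproxUnitarilyEquiv (fun b => φ (ψ b)) (id : B → B)) (a : ℕ → A) (b : ℕ → B) :
    ∃ (u : ℕ → unitary B) (v : ℕ → unitary A),
      IsApproxIntertwining (fun n => φ.conjUnitary (u n)) (fun n => ψ.conjUnitary (v n)) a
        (fun n => (1 / 2 : ℝ) ^ n) ∧
      IsApproxIntertwining (fun n => ψ.conjUnitary (v n)) (fun n => φ.conjUnitary (u (n + 1))) b
        (fun n => (1 / 2 : ℝ) ^ n) := by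
  classical
  have hε (n : ℕ) : (0 : ℝ) < (1 / 2) ^ n := by positivity
  choose stepA hstepA using fun n F (P : unitary B) => (h1.comp_conj P) F _ (hε n)
  choose stepB hstepB using fun n F (Q : unitary A) => (h2.comp_conj Q) F _ (hε n)
  have hA n F P : ∀ x ∈ F,
      dist (ψ.conjUnitary (stepA n F P) (φ.conjUnitary P x)) x ≤ (1 / 2) ^ n :=
    fun x hx => by rw [dist_eq_norm]; exact (hstepA n F P x hx).le
  have hB n F Q : ∀ y ∈ F,
      dist (φ.conjUnitary (stepB n F Q) (ψ.conjUnitary Q y)) y ≤ (1 / 2) ^ n :=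
    fun y hy => by rw [dist_eq_norm]; exact (hstepB n F Q y hy).le
  -- stage `n` is `(u n, v n)`; `v n` corrects `ψ ∘ φ` near `a 0, …, a n` and the images of
  -- `b 0, …, b (n - 1)`, then `u (n + 1)` corrects `φ ∘ ψ` near `b 0, …, b n` and the images
  -- of `a 0, …, a n`
  let next (n : ℕ) (w : unitary B × unitary A) : unitary B × unitary A :=
    let u' := stepB n ((range (n + 1)).image b ∪ (range (n + 1)).image (φ.conjUnitary w.1 ∘ a)) w.2
    (u', stepA (n + 1) ((range (n + 2)).image a ∪ (range (n + 1)).image (ψ.conjUnitary w.2 ∘ b)) u')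
  let w (n : ℕ) : unitary B × unitary A := Nat.rec (1, stepA 0 {a 0} 1) next n
  refine ⟨fun n => (w n).1, fun n => (w n).2, fun n j hj => ⟨?_, ?_⟩, fun n j hj => ⟨?_, ?_⟩⟩
  · cases n with
    | zero =>
      obtain rfl : j = 0 := by omega
      exact hA 0 _ _ _ (mem_singleton_self _)
    | succ n =>
      refine hA _ _ _ _ (mem_union_left _ (mem_image_of_mem _ (mem_range.2 ?_)))
      omega
  · refine hB _ _ _ _ (mem_union_right _ (mem_image_of_mem (φ.conjUnitary (w n).1 ∘ a)
      (mem_range.2 ?_)))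
    omega
  · refine hB _ _ _ _ (mem_union_left _ (mem_image_of_mem _ (mem_range.2 ?_)))
    omega
  · refine (hA _ _ _ _ (mem_union_right _ (mem_image_of_mem (ψ.conjUnitary (w n).2 ∘ b)
      (mem_range.2 ?_)))).trans ?_
    · omega
    · exact pow_le_pow_of_le_one (by norm_num) (by norm_num) n.le_succ

end CStarAlgebra

/-- Elliott's two-sided intertwining argument, strong form: if `φ : A → B` and `ψ : B → A`
are unital `*`-homomorphisms between separable unital C*-algebras with `ψ ∘ φ ≈au id_A` and
`φ ∘ ψ ≈au id_B`, then there is a `*`-isomorphism `θ : A ≅ B` with `θ ≈au φ` and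
`θ⁻¹ ≈au ψ`. -/
theorem elliott_two_sided_intertwining_strong
    {A B : Type*} [CStarAlgebra A] [CStarAlgebra B]
    [TopologicalSpace.SeparableSpace A] [TopologicalSpace.SeparableSpace B]
    (φ : A →⋆ₐ[ℂ] B) (ψ : B →⋆ₐ[ℂ] A)
    (h1 : ApproxUnitarilyEquiv (fun a => ψ (φ a)) (id : A → A))
    (h2 : ApproxUnitarilyEquiv (fun b => φ (ψ b)) (id : B → B)) :
    ∃ θ : A ≃⋆ₐ[ℂ] B,
      ApproxUnitarilyEquiv (fun a => θ a) (fun a => φ a) ∧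
      ApproxUnitarilyEquiv (fun b => θ.symm b) (fun b => ψ b) := by
  obtain ⟨u, v, hφ, hψ⟩ := exists_unitaries_isApproxIntertwining φ ψ h1 h2 (denseSeq A) (denseSeq B)
  have hδ := summable_geometric_two
  have hδ₀ := hδ.tendsto_atTop_zero
  have hφL n := NonUnitalStarAlgHom.lipschitzWith_one (φ.conjUnitary (u n))
  have hψL n := NonUnitalStarAlgHom.lipschitzWith_one (ψ.conjUnitary (v n))
  choose θ hθ using fun x =>
    cauchySeq_tendsto_of_complete (hφ.cauchySeq hφL (denseRange_denseSeq A) hδ x)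
  choose θ' hθ' using fun y =>
    cauchySeq_tendsto_of_complete (hψ.cauchySeq hψL (denseRange_denseSeq B) hδ y)
  refine ⟨.ofStarAlgHom (.ofTendsto _ θ hθ) (.ofTendsto _ θ' hθ') ?_ ?_,
    (ApproxUnitarilyEquiv.of_tendsto (φ := φ) u hθ).symm,
    (ApproxUnitarilyEquiv.of_tendsto (φ := ψ) v hθ').symm⟩
  · ext x
    exact Function.leftInverse_of_tendsto hθ hθ' hψL
      (hφ.tendsto_comp hφL hψL (denseRange_denseSeq A) hδ₀) x
  · ext y
    exact Function.leftInverse_of_tendsto hθ' (fun x => (hθ x).comp (tendsto_add_atTop_nat 1))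
      (fun n => hφL (n + 1))
      (hψ.tendsto_comp hψL (fun n => hφL (n + 1)) (denseRange_denseSeq B) hδ₀) y
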